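/- arXiv:1212.4717 — 5 statements merged into one kernel-verified Lean document; each statement's English description precedes it below -/
import Mathlib

section
/- For every t > 0 and every φ ≥ 0, the Gaussian mean of the one-step update equals the deterministic odds update: ∫_ℝ j(t, φ, z) γ(z) dz = e^{λt}(φ + 1) − 1. -/
/-!
Both terms of `j(t, φ, z)` are exponentials of affine functions of `z`, and the Gaussian moment
generating function `∫ e^{a + b z} γ(z) dz = e^{a + b²/2}` computes their means: the first has
mean `e^{λt} φ`, and for each `u` the integrand of the second has mean `λ e^{λu}`, the quadratic
terms `α² u² / (2t)` cancelling. The integrand is nonnegative, so Tonelli lets us exchange the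
`z`- and `u`-integrals, and `∫₀ᵗ λ e^{λu} du = e^{λt} - 1`.
-/

open MeasureTheory Real

/-- Standard Gaussian density on ℝ. -/
noncomputable def gaussDensity (z : ℝ) : ℝ := Real.exp (-z ^ 2 / 2) / Real.sqrt (2 * Real.pi)

/-- One-step update of the conditional odds process upon observing a normalized
increment `z` after a waiting time `t`, starting from odds `φ`. -/
noncomputable def jfun (lam alp t φ z : ℝ) : ℝ :=
  Real.exp (alp * z * Real.sqrt t + (lam - alp ^ 2 / 2) * t) * φ +
    ∫ u in (0:ℝ)..t, lam * Real.exp ((lam + alp * z / Real.sqrt t) * u - alp ^ 2 * u ^ 2 / (2 * t))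

theorem MeasureTheory.integrable_prod_of_nonneg {α β : Type*} [MeasurableSpace α]
    [MeasurableSpace β] {μ : Measure α} {ν : Measure β} [SFinite μ] [SFinite ν]
    {f : α × β → ℝ} (hf : AEStronglyMeasurable f (μ.prod ν)) (hf₀ : 0 ≤ f)
    (hfx : ∀ᵐ y ∂ν, Integrable (fun x => f (x, y)) μ)
    (hfy : Integrable (fun y => ∫ x, f (x, y) ∂μ) ν) :
    Integrable f (μ.prod ν) := by
  refine (integrable_prod_iff' hf).2 ⟨hfx, ?_⟩
  simpa only [Real.norm_of_nonneg (hf₀ _)] using hfy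

theorem integral_mul_exp_mul (c t : ℝ) :
    ∫ u in (0:ℝ)..t, c * exp (c * u) = exp (c * t) - 1 := by
  have hderiv (u : ℝ) : HasDerivAt (fun u => exp (c * u)) (c * exp (c * u)) u := by
    simpa [mul_comm] using ((hasDerivAt_id u).const_mul c).exp
  rw [intervalIntegral.integral_eq_sub_of_hasDerivAt (fun u _ => hderiv u)
    (by apply Continuous.intervalIntegrable; fun_prop), mul_zero, exp_zero]

theorem gaussDensity_eq_gaussianPDFReal :
    gaussDensity = ProbabilityTheory.gaussianPDFReal 0 1 := by
  ext z
  simp [gaussDensity, ProbabilityTheory.gaussianPDFReal, div_eq_inv_mul]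

theorem exp_add_mul_mul_gaussDensity (a b z : ℝ) :
    exp (a + b * z) * gaussDensity z = exp (a + b ^ 2 / 2) * gaussDensity (z - b) := by
  simp only [gaussDensity, mul_div_assoc', ← exp_add]
  ring_nf

theorem integral_exp_add_mul_mul_gaussDensity (a b : ℝ) :
    ∫ z, exp (a + b * z) * gaussDensity z = exp (a + b ^ 2 / 2) := by
  simp_rw [exp_add_mul_mul_gaussDensity, gaussDensity_eq_gaussianPDFReal]
  rw [integral_const_mul, integral_sub_right_eq_self (ProbabilityTheory.gaussianPDFReal 0 1),
    ProbabilityTheory.integral_gaussianPDFReal_eq_one 0 one_ne_zero, mul_one]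

theorem integral_exp_drift_mul_gaussDensity (lam alp : ℝ) {t : ℝ} (ht : 0 ≤ t) :
    ∫ z, exp (alp * z * √t + (lam - alp ^ 2 / 2) * t) * gaussDensity z = exp (lam * t) := by
  simp_rw [show ∀ z, alp * z * √t + (lam - alp ^ 2 / 2) * t
      = (lam - alp ^ 2 / 2) * t + alp * √t * z from fun z => by ring,
    integral_exp_add_mul_mul_gaussDensity, mul_pow, sq_sqrt ht]
  ring_nf

theorem integral_exp_bridge_mul_gaussDensity (lam alp : ℝ) {t : ℝ} (ht : 0 < t) (u : ℝ) :
    ∫ z, exp ((lam + alp * z / √t) * u - alp ^ 2 * u ^ 2 / (2 * t)) * gaussDensity z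
      = exp (lam * u) := by
  simp_rw [show ∀ z, (lam + alp * z / √t) * u - alp ^ 2 * u ^ 2 / (2 * t)
      = (lam * u - alp ^ 2 * u ^ 2 / (2 * t)) + alp * u / √t * z from fun z => by ring,
    integral_exp_add_mul_mul_gaussDensity, div_pow, sq_sqrt ht.le]
  congr 1
  field_simp
  ring

theorem integrable_exp_bridge_mul_gaussDensity_prod (lam alp : ℝ) {t : ℝ} (ht : 0 < t) :
    Integrable (Function.uncurry fun z u =>
        exp ((lam + alp * z / √t) * u - alp ^ 2 * u ^ 2 / (2 * t)) * gaussDensity z)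
      (volume.prod (volume.restrict (Set.Ioc 0 t))) := by
  have hz := integral_exp_bridge_mul_gaussDensity lam alp ht
  refine integrable_prod_of_nonneg ?_ (fun p => ?_) (.of_forall fun u => ?_) ?_
  · apply Continuous.aestronglyMeasurable
    simp only [Function.uncurry_def, gaussDensity]
    fun_prop
  · simp only [Pi.zero_apply, Function.uncurry_def, gaussDensity]
    positivity
  · exact .of_integral_ne_zero (by simp only [Function.uncurry_apply_pair, hz]; positivity)
  · simp only [Function.uncurry_apply_pair, hz]
    exact (by fun_prop : Continuous _).integrableOn_Ioc

theorem integral_setIntegral_exp_bridge_mul_gaussDensity (lam alp : ℝ) {t : ℝ} (ht : 0 < t) :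
    ∫ z, ∫ u in Set.Ioc 0 t,
        exp ((lam + alp * z / √t) * u - alp ^ 2 * u ^ 2 / (2 * t)) * gaussDensity z
      = ∫ u in (0:ℝ)..t, exp (lam * u) := by
  rw [integral_integral_swap (integrable_exp_bridge_mul_gaussDensity_prod lam alp ht),
    intervalIntegral.integral_of_le ht.le]
  simp only [integral_exp_bridge_mul_gaussDensity lam alp ht]

theorem gaussian_mean_jfun_general (lam alp : ℝ)
    (t : ℝ) (ht : 0 < t) (φ : ℝ) :
    ∫ z : ℝ, jfun lam alp t φ z * gaussDensity z = Real.exp (lam * t) * (φ + 1) - 1 := by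
  have hdrift := integral_exp_drift_mul_gaussDensity lam alp ht.le
  have hdrift_integrable := Integrable.of_integral_ne_zero (hdrift ▸ (exp_pos _).ne')
  have hjump_integrable :=
    (integrable_exp_bridge_mul_gaussDensity_prod lam alp ht).integral_prod_left
  simp only [Function.uncurry_apply_pair] at hjump_integrable
  have hsplit (z : ℝ) : jfun lam alp t φ z * gaussDensity z =
      φ * (exp (alp * z * √t + (lam - alp ^ 2 / 2) * t) * gaussDensity z) +
        lam * ∫ u in Set.Ioc 0 t,
          exp ((lam + alp * z / √t) * u - alp ^ 2 * u ^ 2 / (2 * t)) * gaussDensity z := by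
    rw [jfun, intervalIntegral.integral_of_le ht.le, integral_const_mul, integral_mul_const]
    ring
  calc ∫ z, jfun lam alp t φ z * gaussDensity z
      = φ * exp (lam * t) + lam * ∫ u in (0:ℝ)..t, exp (lam * u) := by
        simp_rw [hsplit]
        rw [integral_add (hdrift_integrable.const_mul φ) (hjump_integrable.const_mul lam),
          integral_const_mul, integral_const_mul, hdrift,
          integral_setIntegral_exp_bridge_mul_gaussDensity lam alp ht]
    _ = exp (lam * t) * (φ + 1) - 1 := by
        rw [← intervalIntegral.integral_const_mul, integral_mul_exp_mul]
        ring

/-- The Gaussian mean of the one-step update equals the deterministic odds update: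
`∫ j(t, φ, z) γ(z) dz = e^{λt}(φ + 1) − 1`. -/
theorem gaussian_mean_jfun (lam alp : ℝ) (hlam : 0 < lam) (halp : 0 < alp)
    (t : ℝ) (ht : 0 < t) (φ : ℝ) (hφ : 0 ≤ φ) :
    ∫ z : ℝ, jfun lam alp t φ z * gaussDensity z = Real.exp (lam * t) * (φ + 1) - 1 :=
  gaussian_mean_jfun_general lam alp t ht φ
end

section
/- There exists a constant C > 0 (depending only on λ and α) such that for every t ∈ (0, 1] and every φ ≥ 0, ∫_ℝ ( j(t, φ, z) − φ )² γ(z) dz ≤ C t (φ + 1)². -/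
open MeasureTheory Real

/-! For `t ≤ 1` the displacement `j(t, φ, z) - φ = φ (e^x - 1) + ∫₀ᵗ …` is
`O(√t (φ + 1) e^{2|α||z|})`: the exponent `x = α z √t + (λ - α²/2) t` is `O(√t (1 + |z|))` and
`|e^x - 1| ≤ |x| e^{|x|}`, while the integrand of the second term is at most `|λ| e^{|λ| + |α||z|}`
on an interval of length `t ≤ √t`. Squaring produces the factor `t (φ + 1)²`, and the remaining
growth `e^{4|α||z|}` is integrable against `γ` because `c|z| - z²/2 ≤ c² - z²/4`. -/

lemma abs_exp_sub_one_le_abs_mul_exp_abs (x : ℝ) : |exp x - 1| ≤ |x| * exp |x| := by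
  rcases le_total 0 x with hx | hx
  · rw [abs_of_nonneg hx, abs_of_nonneg (sub_nonneg.2 (one_le_exp hx))]
    have h := mul_le_mul_of_nonneg_right (add_one_le_exp (-x)) (exp_pos x).le
    rw [← exp_add, neg_add_cancel, exp_zero] at h
    linarith
  · rw [abs_of_nonpos hx, abs_of_nonpos (sub_nonpos.2 (exp_le_one_iff.2 hx))]
    nlinarith [add_one_le_exp x, one_le_exp (neg_nonneg.2 hx)]

lemma mul_exp_le_exp_two_mul (y : ℝ) : y * exp y ≤ exp (2 * y) := by
  rw [two_mul, exp_add]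
  exact mul_le_mul_of_nonneg_right (by linarith [add_one_le_exp y]) (exp_pos y).le

lemma gaussDensity_nonneg (z : ℝ) : 0 ≤ gaussDensity z := by
  unfold gaussDensity; positivity

lemma exp_mul_abs_mul_gaussDensity_le (c z : ℝ) :
    exp (c * |z|) * gaussDensity z ≤ exp (c ^ 2) * (exp (-(1 / 4) * z ^ 2) / √(2 * π)) := by
  have hexp : exp (c * |z|) * exp (-z ^ 2 / 2) ≤ exp (c ^ 2) * exp (-(1 / 4) * z ^ 2) := by
    rw [← exp_add, ← exp_add, exp_le_exp]
    nlinarith [sq_nonneg (c - |z| / 2), sq_abs z]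
  rw [gaussDensity, mul_div_assoc', mul_div_assoc']
  exact div_le_div_of_nonneg_right hexp (sqrt_nonneg _)

lemma integral_exp_neg_quarter_mul_sq_div_sqrt_two_pi :
    ∫ z, exp (-(1 / 4) * z ^ 2) / √(2 * π) = √2 := by
  rw [integral_div, integral_gaussian, div_eq_iff (by positivity), ← sqrt_mul zero_le_two]
  ring_nf

theorem integral_sq_mul_gaussDensity_le {f : ℝ → ℝ} {a c : ℝ}
    (hf : ∀ z, |f z| ≤ a * exp (c * |z|)) :
    ∫ z, f z ^ 2 * gaussDensity z ≤ √2 * exp (4 * c ^ 2) * a ^ 2 := by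
  have hbound (z : ℝ) : f z ^ 2 * gaussDensity z ≤
      a ^ 2 * exp (4 * c ^ 2) * (exp (-(1 / 4) * z ^ 2) / √(2 * π)) :=
    calc f z ^ 2 * gaussDensity z
        ≤ (a * exp (c * |z|)) ^ 2 * gaussDensity z := by
          refine mul_le_mul_of_nonneg_right ?_ (gaussDensity_nonneg z)
          exact sq_le_sq' (abs_le.1 (hf z)).1 (abs_le.1 (hf z)).2
      _ = a ^ 2 * (exp ((2 * c) * |z|) * gaussDensity z) := by
          rw [mul_pow, ← exp_nat_mul]; ring_nf
      _ ≤ a ^ 2 * (exp ((2 * c) ^ 2) * (exp (-(1 / 4) * z ^ 2) / √(2 * π))) := by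
          exact mul_le_mul_of_nonneg_left (exp_mul_abs_mul_gaussDensity_le _ _) (sq_nonneg a)
      _ = a ^ 2 * exp (4 * c ^ 2) * (exp (-(1 / 4) * z ^ 2) / √(2 * π)) := by ring_nf
  have hint : Integrable fun z ↦ exp (-(1 / 4) * z ^ 2) / √(2 * π) :=
    (integrable_exp_neg_mul_sq (by norm_num)).div_const _
  calc ∫ z, f z ^ 2 * gaussDensity z
      ≤ ∫ z, a ^ 2 * exp (4 * c ^ 2) * (exp (-(1 / 4) * z ^ 2) / √(2 * π)) :=
        integral_mono_of_nonneg (.of_forall fun z ↦ mul_nonneg (sq_nonneg _) (gaussDensity_nonneg z))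
          (hint.const_mul _) (.of_forall hbound)
    _ = √2 * exp (4 * c ^ 2) * a ^ 2 := by
        rw [integral_const_mul, integral_exp_neg_quarter_mul_sq_div_sqrt_two_pi]; ring

section SmallTime

variable {t : ℝ} (ht0 : 0 < t) (ht1 : t ≤ 1)
include ht0 ht1

lemma abs_exp_drift_sub_one_le (lam alp z : ℝ) :
    |exp (alp * z * √t + (lam - alp ^ 2 / 2) * t) - 1| ≤
      √t * (exp (2 * |lam - alp ^ 2 / 2|) * exp (2 * |alp| * |z|)) := by
  set y := |alp| * |z| + |lam - alp ^ 2 / 2|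
  have hx : |alp * z * √t + (lam - alp ^ 2 / 2) * t| ≤ √t * y := by
    calc |alp * z * √t + (lam - alp ^ 2 / 2) * t|
        ≤ |alp| * |z| * √t + |lam - alp ^ 2 / 2| * t := by
          refine (abs_add_le _ _).trans_eq ?_
          rw [abs_mul, abs_mul, abs_mul, abs_of_nonneg (sqrt_nonneg t), abs_of_pos ht0]
      _ ≤ √t * y := by
          nlinarith [le_sqrt_self_iff.2 ht1, abs_nonneg (lam - alp ^ 2 / 2)]
  have hy : √t * y ≤ y := mul_le_of_le_one_left (by positivity) (sqrt_le_one.2 ht1)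
  calc |exp (alp * z * √t + (lam - alp ^ 2 / 2) * t) - 1|
      ≤ |alp * z * √t + (lam - alp ^ 2 / 2) * t| * exp |alp * z * √t + (lam - alp ^ 2 / 2) * t| :=
        abs_exp_sub_one_le_abs_mul_exp_abs _
    _ ≤ √t * y * exp y := by gcongr; exact hx.trans hy
    _ ≤ √t * exp (2 * y) := by rw [mul_assoc]; gcongr; exact mul_exp_le_exp_two_mul y
    _ = √t * (exp (2 * |lam - alp ^ 2 / 2|) * exp (2 * |alp| * |z|)) := by
        rw [← exp_add]; congr 2; ring

lemma jfun_integrand_exponent_le (lam alp z : ℝ) {u : ℝ} (hu0 : 0 ≤ u) (hut : u ≤ t) :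
    (lam + alp * z / √t) * u - alp ^ 2 * u ^ 2 / (2 * t) ≤ |lam| + |alp| * |z| := by
  have hst : 0 < √t := sqrt_pos.2 ht0
  have hu1 : u ≤ 1 := hut.trans ht1
  have hus : u / √t ≤ 1 := (div_le_one hst).2 (hut.trans (le_sqrt_self_iff.2 ht1))
  have h1 : lam * u ≤ |lam| := by nlinarith [le_abs_self lam, abs_nonneg lam]
  have h2 : alp * z / √t * u ≤ |alp| * |z| := by
    rw [div_mul_eq_mul_div, mul_div_assoc]
    calc alp * z * (u / √t) ≤ |alp| * |z| * (u / √t) := by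
          rw [← abs_mul]; gcongr; exact le_abs_self _
      _ ≤ |alp| * |z| := mul_le_of_le_one_right (by positivity) hus
  have h3 : 0 ≤ alp ^ 2 * u ^ 2 / (2 * t) := by positivity
  linarith [add_mul lam (alp * z / √t) u]

lemma abs_jfun_integral_le (lam alp z : ℝ) :
    |∫ u in (0:ℝ)..t, lam * exp ((lam + alp * z / √t) * u - alp ^ 2 * u ^ 2 / (2 * t))| ≤
      √t * (|lam| * exp |lam| * exp (2 * |alp| * |z|)) := by
  have hbound : ∀ u ∈ Set.uIoc (0:ℝ) t,
      ‖lam * exp ((lam + alp * z / √t) * u - alp ^ 2 * u ^ 2 / (2 * t))‖ ≤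
        |lam| * exp (|lam| + |alp| * |z|) := by
    intro u hu
    rw [Set.uIoc_of_le ht0.le] at hu
    rw [norm_eq_abs, abs_mul, abs_of_pos (exp_pos _)]
    gcongr
    exact jfun_integrand_exponent_le ht0 ht1 lam alp z hu.1.le hu.2
  calc _ ≤ |lam| * exp (|lam| + |alp| * |z|) * |t - 0| :=
        intervalIntegral.norm_integral_le_of_norm_le_const hbound
    _ ≤ √t * (|lam| * exp |lam| * exp (2 * |alp| * |z|)) := by
        have hE : exp (|alp| * |z|) ≤ exp (2 * |alp| * |z|) :=
          exp_le_exp.2 (by nlinarith [mul_nonneg (abs_nonneg alp) (abs_nonneg z)])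
        rw [sub_zero, abs_of_pos ht0, exp_add, mul_comm √t, ← mul_assoc]
        gcongr
        exact le_sqrt_self_iff.2 ht1

lemma abs_jfun_sub_le (lam alp : ℝ) {φ : ℝ} (hφ : 0 ≤ φ) (z : ℝ) :
    |jfun lam alp t φ z - φ| ≤
      √t * (φ + 1) * (exp (2 * |lam - alp ^ 2 / 2|) + |lam| * exp |lam|) * exp (2 * |alp| * |z|) := by
  set A := exp (2 * |lam - alp ^ 2 / 2|)
  set L := |lam| * exp |lam|
  set E := exp (2 * |alp| * |z|)
  rw [jfun, add_sub_right_comm, ← sub_one_mul, mul_comm _ φ]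
  calc |φ * (exp (alp * z * √t + (lam - alp ^ 2 / 2) * t) - 1) +
        ∫ u in (0:ℝ)..t, lam * exp ((lam + alp * z / √t) * u - alp ^ 2 * u ^ 2 / (2 * t))|
      ≤ φ * |exp (alp * z * √t + (lam - alp ^ 2 / 2) * t) - 1| +
        |∫ u in (0:ℝ)..t, lam * exp ((lam + alp * z / √t) * u - alp ^ 2 * u ^ 2 / (2 * t))| :=
        (abs_add_le _ _).trans_eq (by rw [abs_mul, abs_of_nonneg hφ])
    _ ≤ φ * (√t * (A * E)) + √t * (L * E) := by
        gcongr
        exacts [abs_exp_drift_sub_one_le ht0 ht1 lam alp z, abs_jfun_integral_le ht0 ht1 lam alp z]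
    _ = √t * (φ + 1) * (A + L) * E - √t * E * (A + φ * L) := by ring
    _ ≤ √t * (φ + 1) * (A + L) * E := sub_le_self _ (by positivity)

end SmallTime

theorem gaussian_mean_square_displacement_jfun_general (lam alp : ℝ) :
    ∃ C : ℝ, 0 < C ∧ ∀ t : ℝ, t ∈ Set.Ioc (0:ℝ) 1 → ∀ φ : ℝ, 0 ≤ φ →
      ∫ z : ℝ, (jfun lam alp t φ z - φ) ^ 2 * gaussDensity z ≤ C * t * (φ + 1) ^ 2 := by
  set M := exp (2 * |lam - alp ^ 2 / 2|) + |lam| * exp |lam|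
  refine ⟨√2 * exp (4 * (2 * |alp|) ^ 2) * M ^ 2, by positivity, ?_⟩
  rintro t ⟨ht0, ht1⟩ φ hφ
  calc ∫ z, (jfun lam alp t φ z - φ) ^ 2 * gaussDensity z
      ≤ √2 * exp (4 * (2 * |alp|) ^ 2) * (√t * (φ + 1) * M) ^ 2 :=
        integral_sq_mul_gaussDensity_le (abs_jfun_sub_le ht0 ht1 lam alp hφ)
    _ = √2 * exp (4 * (2 * |alp|) ^ 2) * M ^ 2 * t * (φ + 1) ^ 2 := by
        linear_combination √2 * exp (4 * (2 * |alp|) ^ 2) * M ^ 2 * (φ + 1) ^ 2 * sq_sqrt ht0.le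

/-- Small-time mean-square displacement bound for the one-step odds update:
`∫ (j(t,φ,z) − φ)² γ(z) dz ≤ C t (φ + 1)²` for `t ∈ (0,1]`, with `C` depending
only on `λ` and `α`. -/
theorem gaussian_mean_square_displacement_jfun (lam alp : ℝ) (hlam : 0 < lam) (halp : 0 < alp) :
    ∃ C : ℝ, 0 < C ∧ ∀ t : ℝ, t ∈ Set.Ioc (0:ℝ) 1 → ∀ φ : ℝ, 0 ≤ φ →
      ∫ z : ℝ, (jfun lam alp t φ z - φ) ^ 2 * gaussDensity z ≤ C * t * (φ + 1) ^ 2 :=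
  gaussian_mean_square_displacement_jfun_general lam alp
end

section
/- Let w : [0, ∞) → ℝ be Borel measurable with −1/c ≤ w(x) ≤ 0 for all x ≥ 0. Then −1/c ≤ J₀w(φ) ≤ 0 for every φ ≥ 0. (This is the inductive step showing that the recursively defined value functions v₀ = J₀0, vₙ = J₀vₙ₋₁ all take values in [−1/c, 0].) -/
open MeasureTheory Real

/-- Deterministic evolution of the odds process between observations. -/
noncomputable def varphi (lam t x : ℝ) : ℝ := Real.exp (lam * t) * (x + 1) - 1

/-- The averaging operator `K`: Gaussian expectation of `w` applied to the
one-step odds update. -/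
noncomputable def Kop (lam alp : ℝ) (w : ℝ → ℝ) (t φ : ℝ) : ℝ :=
  ∫ z : ℝ, w (jfun lam alp t φ z) * gaussDensity z

/-- The jump operator `J`: running cost until the next observation at time `t`,
plus the discounted continuation value after that observation. -/
noncomputable def Jop (lam alp c : ℝ) (w : ℝ → ℝ) (t φ : ℝ) : ℝ :=
  (∫ u in (0:ℝ)..t, Real.exp (-(lam * u)) * (varphi lam u φ - lam / c)) +
    (if 0 < t then Real.exp (-(lam * t)) * Kop lam alp w t φ else 0)

/-- The optimized jump operator `J₀ w(φ) = inf_{t ≥ 0} J w(t, φ)`. -/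
noncomputable def J0op (lam alp c : ℝ) (w : ℝ → ℝ) (φ : ℝ) : ℝ :=
  ⨅ t : Set.Ici (0:ℝ), Jop lam alp c w t φ

lemma gaussDensity_eq (z : ℝ) : gaussDensity z = exp (-(1 / 2) * z ^ 2) / √(2 * π) := by
  rw [gaussDensity]; ring_nf

lemma integrable_gaussDensity : Integrable gaussDensity := by
  rw [funext gaussDensity_eq]
  exact (integrable_exp_neg_mul_sq one_half_pos).div_const _

lemma integral_gaussDensity : ∫ z, gaussDensity z = 1 := by
  simp_rw [gaussDensity_eq, integral_div, integral_gaussian]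
  rw [div_eq_one_iff_eq (by positivity)]
  congr 2; ring

/-- `a ≤ 0` covers the non-integrable case, where the Bochner integral is `0`. -/
lemma le_integral_mul_density {α : Type*} [MeasurableSpace α] {μ : Measure α} {ρ : α → ℝ}
    (hρ : 0 ≤ ρ) (hρi : Integrable ρ μ) (hρ1 : ∫ z, ρ z ∂μ = 1)
    {a : ℝ} (ha : a ≤ 0) {f : α → ℝ} (hf : ∀ z, a ≤ f z) :
    a ≤ ∫ z, f z * ρ z ∂μ := by
  by_cases hint : Integrable (fun z => f z * ρ z) μ
  · calc a = ∫ z, a * ρ z ∂μ := by rw [integral_const_mul, hρ1, mul_one]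
      _ ≤ ∫ z, f z * ρ z ∂μ :=
        integral_mono (hρi.const_mul a) hint fun z => mul_le_mul_of_nonneg_right (hf z) (hρ z)
  · rwa [integral_undef hint]

lemma jfun_nonneg {lam t φ : ℝ} (alp z : ℝ) (hlam : 0 ≤ lam) (ht : 0 ≤ t) (hφ : 0 ≤ φ) :
    0 ≤ jfun lam alp t φ z := by
  unfold jfun
  have : 0 ≤ ∫ u in (0 : ℝ)..t, lam * exp ((lam + alp * z / √t) * u - alp ^ 2 * u ^ 2 / (2 * t)) :=
    intervalIntegral.integral_nonneg ht fun u _ => by positivity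
  positivity

lemma le_Kop {lam t φ a : ℝ} (alp : ℝ) {w : ℝ → ℝ} (hlam : 0 ≤ lam) (ht : 0 ≤ t) (hφ : 0 ≤ φ)
    (ha : a ≤ 0) (hw : ∀ x, 0 ≤ x → a ≤ w x) :
    a ≤ Kop lam alp w t φ :=
  le_integral_mul_density gaussDensity_nonneg integrable_gaussDensity integral_gaussDensity ha
    fun z => hw _ (jfun_nonneg alp z hlam ht hφ)

lemma varphi_nonneg {lam t x : ℝ} (hlam : 0 ≤ lam) (ht : 0 ≤ t) (hx : 0 ≤ x) :
    0 ≤ varphi lam t x := by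
  have : 1 ≤ exp (lam * t) := one_le_exp (mul_nonneg hlam ht)
  unfold varphi; nlinarith

lemma integral_mul_exp_neg_mul (lam t : ℝ) :
    ∫ u in (0 : ℝ)..t, lam * exp (-(lam * u)) = 1 - exp (-(lam * t)) := by
  have hderiv (u : ℝ) : HasDerivAt (fun u => -exp (-(lam * u))) (lam * exp (-(lam * u))) u := by
    simpa [mul_comm] using (((hasDerivAt_id u).const_mul lam).neg.exp).fun_neg
  rw [intervalIntegral.integral_eq_sub_of_hasDerivAt (fun u _ => hderiv u)
    (by apply Continuous.intervalIntegrable; fun_prop)]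
  simp only [mul_zero, neg_zero, exp_zero]; ring

lemma neg_div_le_integral_exp_neg_mul_varphi_sub {lam c t φ : ℝ} (hlam : 0 ≤ lam) (ht : 0 ≤ t) (hφ : 0 ≤ φ) :
    -(1 - exp (-(lam * t))) / c ≤
      ∫ u in (0 : ℝ)..t, exp (-(lam * u)) * (varphi lam u φ - lam / c) := by
  calc -(1 - exp (-(lam * t))) / c = ∫ u in (0 : ℝ)..t, exp (-(lam * u)) * (-(lam / c)) := by
        rw [← integral_mul_exp_neg_mul, ← intervalIntegral.integral_neg,
          ← intervalIntegral.integral_div]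
        congr 1; ext u; ring
    _ ≤ _ := by
      refine intervalIntegral.integral_mono_on ht (by apply Continuous.intervalIntegrable; fun_prop)
        (by apply Continuous.intervalIntegrable; unfold varphi; fun_prop) fun u hu => ?_
      have := varphi_nonneg hlam hu.1 hφ
      gcongr; linarith

lemma Jop_zero (lam alp c : ℝ) (w : ℝ → ℝ) (φ : ℝ) : Jop lam alp c w 0 φ = 0 := by
  simp [Jop]

lemma neg_inv_le_Jop {lam c t φ : ℝ} (alp : ℝ) {w : ℝ → ℝ} (hlam : 0 ≤ lam) (hc : 0 ≤ c)
    (hw : ∀ x, 0 ≤ x → -1 / c ≤ w x) (ht : 0 ≤ t) (hφ : 0 ≤ φ) :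
    -1 / c ≤ Jop lam alp c w t φ := by
  have hc' : -1 / c ≤ 0 := div_nonpos_of_nonpos_of_nonneg (by norm_num) hc
  rcases ht.eq_or_lt with rfl | ht
  · rwa [Jop_zero]
  have hrun := neg_div_le_integral_exp_neg_mul_varphi_sub (c := c) hlam ht.le hφ
  have hK := le_Kop alp hlam ht.le hφ hc' hw
  have hcont := mul_le_mul_of_nonneg_left hK (exp_pos (-(lam * t))).le
  rw [Jop, if_pos ht]
  calc -1 / c = -(1 - exp (-(lam * t))) / c + exp (-(lam * t)) * (-1 / c) := by ring
    _ ≤ _ := add_le_add hrun hcont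

theorem J0op_bounds_general (lam alp c : ℝ) (hlam : 0 < lam) (hc : 0 < c)
    (w : ℝ → ℝ)
    (hwl : ∀ x : ℝ, 0 ≤ x → -1 / c ≤ w x)
    (φ : ℝ) (hφ : 0 ≤ φ) :
    -1 / c ≤ J0op lam alp c w φ ∧ J0op lam alp c w φ ≤ 0 := by
  have hJ (t : Set.Ici (0 : ℝ)) : -1 / c ≤ Jop lam alp c w t φ :=
    neg_inv_le_Jop alp hlam.le hc.le hwl t.2 hφ
  refine ⟨le_ciInf hJ, ?_⟩
  calc J0op lam alp c w φ ≤ Jop lam alp c w (⟨0, Set.self_mem_Ici⟩ : Set.Ici (0 : ℝ)) φ :=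
        ciInf_le ⟨-1 / c, Set.forall_mem_range.2 hJ⟩ _
    _ = 0 := Jop_zero lam alp c w φ

/-- If `−1/c ≤ w ≤ 0` on `[0, ∞)`, then `−1/c ≤ J₀w(φ) ≤ 0` for every `φ ≥ 0`. -/
theorem J0op_bounds (lam alp c : ℝ) (hlam : 0 < lam) (halp : 0 < alp) (hc : 0 < c)
    (w : ℝ → ℝ) (hw : Measurable w)
    (hwl : ∀ x : ℝ, 0 ≤ x → -1 / c ≤ w x) (hwu : ∀ x : ℝ, 0 ≤ x → w x ≤ 0)
    (φ : ℝ) (hφ : 0 ≤ φ) :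
    -1 / c ≤ J0op lam alp c w φ ∧ J0op lam alp c w φ ≤ 0 :=
  J0op_bounds_general lam alp c hlam hc w hwl φ hφ
end

section
/- For φ ≥ 0 define t₀*(φ) = max(0, (1/λ)·log((c + λ)/(c(φ + 1)))) and f(t) = ∫₀ᵗ e^{−λu}(varphi(u, φ) − λ/c) du for t ≥ 0. Then: (i) if φ ≤ λ/c, varphi(t₀*(φ), φ) = λ/c; and (ii) f attains its global minimum over [0, ∞) at t = t₀*(φ), i.e. inf_{t ≥ 0} f(t) = f(t₀*(φ)). Equivalently, J₀0(φ) = J0(t₀*(φ), φ), where 0 denotes the identically zero function. -/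
open MeasureTheory Real

/-- With no observations remaining (`w = 0`), the jump operator reduces to the
running cost `J0(t, φ) = ∫₀ᵗ e^{−λu}(varphi(u, φ) − λ/c) du`. -/
noncomputable def Jzero (lam c t φ : ℝ) : ℝ :=
  ∫ u in (0:ℝ)..t, Real.exp (-(lam * u)) * (varphi lam u φ - lam / c)

/-!
In closed form `J0(t, φ) = (φ + 1) t + ((1 + λ/c)/λ)(e^{-λt} - 1)`, a convex function of `t`
whose derivative is the integrand `e^{-λt}(varphi(t, φ) - λ/c)`. If `φ ≤ λ/c` this derivative
vanishes at `t₀*`, where `varphi` reaches `λ/c`; otherwise `t₀* = 0` and the derivative there is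
`φ - λ/c > 0`. Either way the tangent line at `t₀*` shows that `t₀*` minimises `J0` on `[0, ∞)`.
-/

noncomputable def tstar (lam c φ : ℝ) : ℝ :=
  max 0 ((1 / lam) * Real.log ((c + lam) / (c * (φ + 1))))

section

variable {lam c φ : ℝ}

@[simp]
lemma varphi_zero (lam φ : ℝ) : varphi lam 0 φ = φ := by
  simp [varphi]

lemma exp_neg_mul_mul_varphi_sub (lam c u φ : ℝ) :
    exp (-(lam * u)) * (varphi lam u φ - lam / c) =
      (φ + 1) - (1 + lam / c) * exp (-(lam * u)) := by
  have h : exp (-(lam * u)) * exp (lam * u) = 1 := by rw [← exp_add]; simp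
  simp only [varphi]
  linear_combination (φ + 1) * h

lemma hasDerivAt_Jzero_antideriv (hlam : lam ≠ 0) (u : ℝ) :
    HasDerivAt (fun t => (φ + 1) * t + (1 + lam / c) / lam * exp (-(lam * t)))
      (exp (-(lam * u)) * (varphi lam u φ - lam / c)) u := by
  rw [exp_neg_mul_mul_varphi_sub]
  have hlin : HasDerivAt (fun t => -(lam * t)) (-lam) u := by
    simpa using ((hasDerivAt_id' u).const_mul lam).fun_neg
  refine (((hasDerivAt_id' u).const_mul (φ + 1)).fun_add
    (hlin.exp.const_mul ((1 + lam / c) / lam))).congr_deriv ?_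
  field_simp
  ring

lemma Jzero_eq (hlam : lam ≠ 0) (t : ℝ) :
    Jzero lam c t φ = (φ + 1) * t + (1 + lam / c) / lam * (exp (-(lam * t)) - 1) := by
  rw [Jzero, intervalIntegral.integral_eq_sub_of_hasDerivAt
    (fun u _ => hasDerivAt_Jzero_antideriv hlam u)]
  · simp only [mul_zero, zero_add, neg_zero, exp_zero]
    ring
  · apply Continuous.intervalIntegrable
    unfold varphi
    fun_prop

lemma Jzero_add_mul_le (hlam : 0 < lam) (hc : 0 ≤ c) (s t : ℝ) :
    Jzero lam c s φ + (t - s) * (exp (-(lam * s)) * (varphi lam s φ - lam / c)) ≤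
      Jzero lam c t φ := by
  rw [Jzero_eq hlam.ne', Jzero_eq hlam.ne', exp_neg_mul_mul_varphi_sub]
  set K := (1 + lam / c) / lam
  have hK : 0 ≤ K := by positivity
  have htangent : exp (-(lam * s)) * (1 - lam * (t - s)) ≤ exp (-(lam * t)) := by
    have hsplit : exp (-(lam * t)) = exp (-(lam * s)) * exp (-(lam * (t - s))) := by
      rw [← exp_add]; ring_nf
    rw [hsplit]
    gcongr
    linarith [add_one_le_exp (-(lam * (t - s)))]
  have hKlam : K * lam = 1 + lam / c := div_mul_cancel₀ _ hlam.ne'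
  rw [← hKlam]
  linarith [mul_le_mul_of_nonneg_left htangent hK]

lemma one_le_add_div_mul_add_one_iff (hc : 0 < c) (hφ : -1 < φ) :
    1 ≤ (c + lam) / (c * (φ + 1)) ↔ φ ≤ lam / c := by
  rw [one_le_div (by nlinarith), le_div_iff₀ hc]
  constructor <;> intro h <;> linarith

lemma varphi_tstar (hlam : 0 < lam) (hc : 0 < c) (hφ : -1 < φ) (h : φ ≤ lam / c) :
    varphi lam (tstar lam c φ) φ = lam / c := by
  have hA : 1 ≤ (c + lam) / (c * (φ + 1)) := (one_le_add_div_mul_add_one_iff hc hφ).2 h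
  have hlog := log_nonneg hA
  rw [tstar, max_eq_right (by positivity), varphi, one_div, mul_inv_cancel_left₀ hlam.ne',
    exp_log (by linarith)]
  have : φ + 1 ≠ 0 := by linarith
  field_simp
  ring

lemma tstar_eq_zero (hlam : 0 < lam) (hc : 0 < c) (hφ : -1 < φ) (h : lam / c < φ) :
    tstar lam c φ = 0 := by
  have hA : (c + lam) / (c * (φ + 1)) < 1 := by
    by_contra! hA
    exact h.not_ge ((one_le_add_div_mul_add_one_iff hc hφ).1 hA)
  have hφ1 : 0 < φ + 1 := by linarith
  have hlog : log ((c + lam) / (c * (φ + 1))) < 0 := log_neg (by positivity) hA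
  exact max_eq_left (mul_nonpos_of_nonneg_of_nonpos (by positivity) hlog.le)

lemma isMinOn_Jzero_tstar (hlam : 0 < lam) (hc : 0 < c) (hφ : -1 < φ) :
    IsMinOn (fun t => Jzero lam c t φ) (Set.Ici 0) (tstar lam c φ) := by
  intro t (ht : 0 ≤ t)
  have htangent := Jzero_add_mul_le (φ := φ) hlam hc.le (tstar lam c φ) t
  rcases le_or_gt φ (lam / c) with h | h
  · simpa [varphi_tstar hlam hc hφ h] using htangent
  · rw [tstar_eq_zero hlam hc hφ h] at htangent ⊢
    simp only [sub_zero, mul_zero, neg_zero, exp_zero, one_mul, varphi_zero] at htangent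
    show Jzero lam c 0 φ ≤ Jzero lam c t φ
    linarith [mul_nonneg ht (sub_pos.2 h).le]

end

/-- For `t₀*(φ) = max(0, (1/λ)log((c + λ)/(c(φ + 1))))`:
(i) if `φ ≤ λ/c`, then `varphi(t₀*(φ), φ) = λ/c`; and
(ii) `t ↦ J0(t, φ)` attains its global infimum over `[0, ∞)` at `t₀*(φ)`, i.e.
`J₀0(φ) = J0(t₀*(φ), φ)`. -/
theorem Jzero_min_at_tstar (lam c : ℝ) (hlam : 0 < lam) (hc : 0 < c)
    (φ : ℝ) (hφ : 0 ≤ φ) :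
    (φ ≤ lam / c →
        varphi lam (max 0 ((1 / lam) * Real.log ((c + lam) / (c * (φ + 1))))) φ = lam / c) ∧
    (∀ t : ℝ, 0 ≤ t →
        Jzero lam c (max 0 ((1 / lam) * Real.log ((c + lam) / (c * (φ + 1))))) φ ≤
          Jzero lam c t φ) ∧
    (⨅ t : Set.Ici (0:ℝ), Jzero lam c t φ) =
      Jzero lam c (max 0 ((1 / lam) * Real.log ((c + lam) / (c * (φ + 1))))) φ := by
  have hφ' : -1 < φ := by linarith
  have hmin := isMinOn_Jzero_tstar hlam hc hφ'
  exact ⟨varphi_tstar hlam hc hφ', fun t ht => hmin ht, hmin.iInf_eq (le_max_left _ _)⟩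
end

section
/- For every k ≥ 1, Φₖ is integrable and E[Φₖ | Fₖ₋₁] = e^{λt}(Φₖ₋₁ + 1) − 1 almost surely. -/
open MeasureTheory Real

/-- The discretely observed odds chain: `Φ₀ = φ` and `Φₖ = j(t, Φₖ₋₁, Zₖ)`. -/
noncomputable def oddsChain {Ω : Type*} (lam alp t φ : ℝ) (Z : ℕ → Ω → ℝ) : ℕ → Ω → ℝ
  | 0 => fun _ => φ
  | k + 1 => fun ω => jfun lam alp t (oddsChain lam alp t φ Z k ω) (Z (k + 1) ω)

/-- The filtration `Fₖ = σ(Z₁, …, Zₖ)` generated by the first `k` observations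
(`F₀` is trivial). -/
def obsFiltration {Ω : Type*} (Z : ℕ → Ω → ℝ) (k : ℕ) : MeasurableSpace Ω :=
  ⨆ i ∈ Set.Icc 1 k, MeasurableSpace.comap (Z i) inferInstance

/-!
The chain is affine in its previous value: `Φₖ = A(Zₖ) Φₖ₋₁ + B(Zₖ)`, where `Φₖ₋₁` is
`Fₖ₋₁`-measurable and the coefficients only depend on the fresh observation `Zₖ`, which is
independent of `Fₖ₋₁`. Hence `E[Φₖ | Fₖ₋₁] = E[A(Z)] Φₖ₋₁ + E[B(Z)]`. The Gaussian moment
generating function `E[exp (c Z)] = exp (c² / 2)` gives `E[A(Z)] = e^{λt}`, and after exchanging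
the two integrals in `B` it gives `E[B(Z)] = ∫₀ᵗ λ e^{λu} du = e^{λt} - 1`.
-/

open ProbabilityTheory

lemma Measurable.stronglyMeasurable_comp_comap {Ω 𝓧 : Type*} {m𝓧 : MeasurableSpace 𝓧}
    {f : 𝓧 → ℝ} (hf : Measurable f) (X : Ω → 𝓧) :
    StronglyMeasurable[MeasurableSpace.comap X m𝓧] (f ∘ X) :=
  (hf.comp (comap_measurable X)).stronglyMeasurable

namespace ProbabilityTheory

variable {Ω 𝓧 : Type*} {mΩ : MeasurableSpace Ω} {m𝓧 : MeasurableSpace 𝓧} {μ : Measure Ω}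

lemma HasLaw.integrable_comp {ν : Measure 𝓧} {X : Ω → 𝓧} (hX : HasLaw X ν μ) {f : 𝓧 → ℝ}
    (hf : Integrable f ν) : Integrable (f ∘ X) μ := by
  rw [← hX.map_eq] at hf
  exact hf.comp_aemeasurable hX.aemeasurable

variable {m₁ m₂ : MeasurableSpace Ω} {A B X : Ω → ℝ}

lemma Indep.indepFun_of_stronglyMeasurable (hind : Indep m₁ m₂ μ) (hA : StronglyMeasurable[m₁] A)
    (hX : StronglyMeasurable[m₂] X) : IndepFun A X μ := by
  rw [IndepFun_iff_Indep]
  exact indep_of_indep_of_le_right (indep_of_indep_of_le_left hind hA.measurable.comap_le)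
    hX.measurable.comap_le

lemma condExp_mul_add_of_indep [IsFiniteMeasure μ] (hm₁ : m₁ ≤ mΩ) (hm₂ : m₂ ≤ mΩ)
    (hind : Indep m₁ m₂ μ) (hA : StronglyMeasurable[m₁] A) (hB : StronglyMeasurable[m₁] B)
    (hX : StronglyMeasurable[m₂] X) (hAi : Integrable A μ) (hBi : Integrable B μ)
    (hXi : Integrable X μ) :
    μ[fun ω => A ω * X ω + B ω | m₂] =ᵐ[μ] fun ω => μ[A] * X ω + μ[B] := by
  have hAXi := (hind.indepFun_of_stronglyMeasurable hA hX).integrable_mul hAi hXi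
  filter_upwards [condExp_add hAXi hBi m₂, condExp_mul_of_stronglyMeasurable_right hX hAXi hAi,
    condExp_indep_eq hm₁ hm₂ hA hind, condExp_indep_eq hm₁ hm₂ hB hind] with ω hsum hpull hA hB
  rw [show (fun ω => A ω * X ω + B ω) = A * X + B from rfl, hsum, Pi.add_apply, hpull,
    Pi.mul_apply, hA, hB]

end ProbabilityTheory

lemma integral_exp_add_mul_gaussianReal (m : ℝ) (v : NNReal) (a c : ℝ) :
    ∫ x, exp (a + c * x) ∂gaussianReal m v = exp (a + m * c + v * c ^ 2 / 2) := by
  simp_rw [exp_add a, integral_const_mul]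
  rw [← mgf, mgf_fun_id_gaussianReal, add_assoc, exp_add a]

lemma integrable_exp_add_mul_gaussianReal (m : ℝ) (v : NNReal) (a c : ℝ) :
    Integrable (fun x => exp (a + c * x)) (gaussianReal m v) := by
  simp_rw [exp_add a]
  exact (integrable_exp_mul_gaussianReal c).const_mul _

section jfun

variable (lam alp : ℝ)

noncomputable def jfunSlope (t z : ℝ) : ℝ := exp (alp * z * sqrt t + (lam - alp ^ 2 / 2) * t)

noncomputable def jfunKernel (t z u : ℝ) : ℝ :=
  exp ((lam + alp * z / sqrt t) * u - alp ^ 2 * u ^ 2 / (2 * t))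

noncomputable def jfunIntercept (t z : ℝ) : ℝ := ∫ u in (0 : ℝ)..t, lam * jfunKernel lam alp t z u

lemma continuous_jfunSlope (t : ℝ) : Continuous (jfunSlope lam alp t) := by
  unfold jfunSlope; fun_prop

lemma continuous_jfunIntercept (t : ℝ) : Continuous (jfunIntercept lam alp t) := by
  unfold jfunIntercept jfunKernel; fun_prop

lemma integrable_jfunSlope (t : ℝ) : Integrable (jfunSlope lam alp t) (gaussianReal 0 1) := by
  convert integrable_exp_add_mul_gaussianReal 0 1 ((lam - alp ^ 2 / 2) * t) (alp * sqrt t)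
    using 3 with z
  unfold jfunSlope; ring_nf

lemma integral_jfunSlope {t : ℝ} (ht : 0 ≤ t) :
    ∫ z, jfunSlope lam alp t z ∂gaussianReal 0 1 = exp (lam * t) := by
  have := integral_exp_add_mul_gaussianReal 0 1 ((lam - alp ^ 2 / 2) * t) (alp * sqrt t)
  rw [mul_pow, sq_sqrt ht] at this
  convert this using 3 with z
  · unfold jfunSlope; ring_nf
  · push_cast; ring

lemma jfunKernel_pos (t z u : ℝ) : 0 < jfunKernel lam alp t z u := exp_pos _

lemma jfunKernel_eq (t z u : ℝ) : jfunKernel lam alp t z u =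
    exp ((lam * u - alp ^ 2 * u ^ 2 / (2 * t)) + alp * u / sqrt t * z) := by
  unfold jfunKernel; ring_nf

lemma integrable_jfunKernel (t u : ℝ) :
    Integrable (fun z => jfunKernel lam alp t z u) (gaussianReal 0 1) := by
  simp_rw [jfunKernel_eq]
  exact integrable_exp_add_mul_gaussianReal 0 1 _ _

-- `exp (c * z)` has Gaussian mean `exp (c ^ 2 / 2)`; for `c = alp * u / √t` this cancels the
-- quadratic term of the exponent.
lemma integral_jfunKernel {t : ℝ} (ht : 0 ≤ t) (u : ℝ) :
    ∫ z, jfunKernel lam alp t z u ∂gaussianReal 0 1 = exp (lam * u) := by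
  simp_rw [jfunKernel_eq]
  rw [integral_exp_add_mul_gaussianReal, div_pow, sq_sqrt ht]
  congr 1
  push_cast
  ring

lemma integrable_prod_jfunKernel {t : ℝ} (ht : 0 ≤ t) :
    Integrable (fun p : ℝ × ℝ => lam * jfunKernel lam alp t p.1 p.2)
      ((gaussianReal 0 1).prod (volume.restrict (Set.Ioc 0 t))) := by
  have hcont : Continuous (fun p : ℝ × ℝ => lam * jfunKernel lam alp t p.1 p.2) := by
    unfold jfunKernel; fun_prop
  refine (integrable_prod_iff' hcont.aestronglyMeasurable).2
    ⟨ae_of_all _ fun u => (integrable_jfunKernel lam alp t u).const_mul lam, ?_⟩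
  simp only [norm_mul, Real.norm_eq_abs, abs_of_pos, jfunKernel_pos, integral_const_mul,
    integral_jfunKernel lam alp ht]
  exact Continuous.integrableOn_Ioc (by fun_prop)

lemma integrable_jfunIntercept {t : ℝ} (ht : 0 ≤ t) :
    Integrable (jfunIntercept lam alp t) (gaussianReal 0 1) := by
  refine (integrable_prod_jfunKernel lam alp ht).integral_prod_left.congr
    (ae_of_all _ fun z => ?_)
  simp only [jfunIntercept, intervalIntegral.integral_of_le ht]

lemma integral_jfunIntercept {t : ℝ} (ht : 0 ≤ t) :
    ∫ z, jfunIntercept lam alp t z ∂gaussianReal 0 1 = exp (lam * t) - 1 := by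
  have hderiv (u : ℝ) : HasDerivAt (fun y => exp (lam * y)) (lam * exp (lam * u)) u := by
    simpa [mul_comm] using ((hasDerivAt_id u).const_mul lam).exp
  calc ∫ z, jfunIntercept lam alp t z ∂gaussianReal 0 1
      = ∫ z, (∫ u in Set.Ioc 0 t, lam * jfunKernel lam alp t z u) ∂gaussianReal 0 1 := by
        simp_rw [jfunIntercept, intervalIntegral.integral_of_le ht]
    _ = ∫ u in Set.Ioc 0 t, ∫ z, lam * jfunKernel lam alp t z u ∂gaussianReal 0 1 :=
        integral_integral_swap (integrable_prod_jfunKernel lam alp ht)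
    _ = ∫ u in (0 : ℝ)..t, lam * exp (lam * u) := by
        simp_rw [intervalIntegral.integral_of_le ht, integral_const_mul,
          integral_jfunKernel lam alp ht]
    _ = exp (lam * t) - 1 := by
        rw [intervalIntegral.integral_eq_sub_of_hasDerivAt (fun u _ => hderiv u)
          (Continuous.intervalIntegrable (by fun_prop) 0 t)]
        simp

end jfun

section oddsChain

variable {Ω : Type*} {mΩ : MeasurableSpace Ω} {μ : Measure Ω} {Z : ℕ → Ω → ℝ}

lemma comap_le_obsFiltration {i k : ℕ} (hi : i ∈ Set.Icc 1 k) :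
    MeasurableSpace.comap (Z i) inferInstance ≤ obsFiltration Z k :=
  le_biSup (fun i => MeasurableSpace.comap (Z i) inferInstance) hi

lemma obsFiltration_le (hZ : ∀ k, Measurable (Z k)) (k : ℕ) : obsFiltration Z k ≤ mΩ :=
  iSup₂_le fun i _ => (hZ i).comap_le

lemma obsFiltration_mono : Monotone (obsFiltration Z) :=
  fun _ _ hkl => biSup_mono fun _ hi => ⟨hi.1, hi.2.trans hkl⟩

lemma indep_comap_obsFiltration (hZ : ∀ k, Measurable (Z k)) (hind : iIndepFun Z μ) (k : ℕ) :
    Indep (MeasurableSpace.comap (Z (k + 1)) inferInstance) (obsFiltration Z k) μ :=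
  indep_of_indep_of_le_left
    (indep_iSup_of_disjoint (fun i => (hZ i).comap_le) hind.iIndep (S := {k + 1})
      (T := Set.Icc 1 k) (by simp))
    (le_biSup (fun i => MeasurableSpace.comap (Z i) inferInstance) rfl)

variable (lam alp t φ : ℝ)

lemma oddsChain_succ (k : ℕ) : oddsChain lam alp t φ Z (k + 1) = fun ω =>
    jfunSlope lam alp t (Z (k + 1) ω) * oddsChain lam alp t φ Z k ω +
      jfunIntercept lam alp t (Z (k + 1) ω) := rfl

lemma stronglyMeasurable_oddsChain (k : ℕ) :
    StronglyMeasurable[obsFiltration Z k] (oddsChain lam alp t φ Z k) := by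
  induction k with
  | zero => exact stronglyMeasurable_const
  | succ k ih =>
    have hZ : Measurable[obsFiltration Z (k + 1)] (Z (k + 1)) :=
      measurable_iff_comap_le.2 (comap_le_obsFiltration ⟨le_add_self, le_rfl⟩)
    have hprev := ih.measurable.mono (obsFiltration_mono k.le_succ) le_rfl
    rw [oddsChain_succ]
    exact ((((continuous_jfunSlope lam alp t).measurable.comp hZ).mul hprev).add
      ((continuous_jfunIntercept lam alp t).measurable.comp hZ)).stronglyMeasurable

variable {lam alp t φ}

lemma integrable_oddsChain [IsFiniteMeasure μ] (ht : 0 ≤ t) (hZ : ∀ k, Measurable (Z k))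
    (hlaw : ∀ k, HasLaw (Z (k + 1)) (gaussianReal 0 1) μ) (hind : iIndepFun Z μ) (k : ℕ) :
    Integrable (oddsChain lam alp t φ Z k) μ := by
  induction k with
  | zero => exact integrable_const φ
  | succ k ih =>
    exact (((indep_comap_obsFiltration hZ hind k).indepFun_of_stronglyMeasurable
      ((continuous_jfunSlope lam alp t).measurable.stronglyMeasurable_comp_comap _)
      (stronglyMeasurable_oddsChain lam alp t φ k)).integrable_mul
      ((hlaw k).integrable_comp (integrable_jfunSlope lam alp t)) ih).add
      ((hlaw k).integrable_comp (integrable_jfunIntercept lam alp ht))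

lemma condExp_oddsChain_succ [IsFiniteMeasure μ] (ht : 0 ≤ t) (hZ : ∀ k, Measurable (Z k))
    (hlaw : ∀ k, HasLaw (Z (k + 1)) (gaussianReal 0 1) μ) (hind : iIndepFun Z μ) (k : ℕ) :
    μ[oddsChain lam alp t φ Z (k + 1) | obsFiltration Z k] =ᵐ[μ]
      fun ω => exp (lam * t) * (oddsChain lam alp t φ Z k ω + 1) - 1 := by
  refine (condExp_mul_add_of_indep (hZ (k + 1)).comap_le (obsFiltration_le hZ k)
    (indep_comap_obsFiltration hZ hind k)
    ((continuous_jfunSlope lam alp t).measurable.stronglyMeasurable_comp_comap _)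
    ((continuous_jfunIntercept lam alp t).measurable.stronglyMeasurable_comp_comap _)
    (stronglyMeasurable_oddsChain lam alp t φ k)
    ((hlaw k).integrable_comp (integrable_jfunSlope lam alp t))
    ((hlaw k).integrable_comp (integrable_jfunIntercept lam alp ht))
    (integrable_oddsChain ht hZ hlaw hind k)).trans (.of_eq ?_)
  rw [(hlaw k).integral_comp (continuous_jfunSlope lam alp t).aestronglyMeasurable,
    (hlaw k).integral_comp (continuous_jfunIntercept lam alp t).aestronglyMeasurable,
    integral_jfunSlope lam alp ht, integral_jfunIntercept lam alp ht]
  ext ω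
  ring

end oddsChain

theorem oddsChain_condexp_general (lam alp t : ℝ) (ht : 0 < t)
    {Ω : Type*} [MeasurableSpace Ω] (μ : MeasureTheory.Measure Ω) [IsProbabilityMeasure μ]
    (Z : ℕ → Ω → ℝ) (hZmeas : ∀ k, Measurable (Z k))
    (hZdist : ∀ k, 1 ≤ k → μ.map (Z k) = ProbabilityTheory.gaussianReal 0 1)
    (hZindep : ProbabilityTheory.iIndepFun Z μ)
    (φ : ℝ) :
    ∀ k : ℕ, 1 ≤ k →
      Integrable (oddsChain lam alp t φ Z k) μ ∧
        μ[oddsChain lam alp t φ Z k | obsFiltration Z (k - 1)] =ᵐ[μ]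
          fun ω => Real.exp (lam * t) * (oddsChain lam alp t φ Z (k - 1) ω + 1) - 1 := by
  have hlaw (k : ℕ) : HasLaw (Z (k + 1)) (gaussianReal 0 1) μ :=
    ⟨(hZmeas (k + 1)).aemeasurable, hZdist (k + 1) (Nat.le_add_left 1 k)⟩
  intro _ hk
  obtain ⟨k, rfl⟩ := Nat.exists_eq_add_of_le' hk
  rw [Nat.add_sub_cancel]
  exact ⟨integrable_oddsChain ht.le hZmeas hlaw hZindep (k + 1),
    condExp_oddsChain_succ ht.le hZmeas hlaw hZindep k⟩

/-- For i.i.d. standard Gaussian innovations, each `Φₖ` (`k ≥ 1`) is integrable and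
`E[Φₖ | Fₖ₋₁] = e^{λt}(Φₖ₋₁ + 1) − 1` almost surely. -/
theorem oddsChain_condexp (lam alp t : ℝ) (hlam : 0 < lam) (halp : 0 < alp) (ht : 0 < t)
    {Ω : Type*} [MeasurableSpace Ω] (μ : MeasureTheory.Measure Ω) [IsProbabilityMeasure μ]
    (Z : ℕ → Ω → ℝ) (hZmeas : ∀ k, Measurable (Z k))
    (hZdist : ∀ k, 1 ≤ k → μ.map (Z k) = ProbabilityTheory.gaussianReal 0 1)
    (hZindep : ProbabilityTheory.iIndepFun Z μ)
    (φ : ℝ) (hφ : 0 ≤ φ) :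
    ∀ k : ℕ, 1 ≤ k →
      Integrable (oddsChain lam alp t φ Z k) μ ∧
        μ[oddsChain lam alp t φ Z k | obsFiltration Z (k - 1)] =ᵐ[μ]
          fun ω => Real.exp (lam * t) * (oddsChain lam alp t φ Z (k - 1) ω + 1) - 1 :=
  oddsChain_condexp_general lam alp t ht μ Z hZmeas hZdist hZindep φ
end
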